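/- arXiv:0706.4343 — 3 statements merged into one kernel-verified Lean document; each statement's English description precedes it below -/
import Mathlib

section
/- Let (X; f_0,…,f_{n−1}) be an iterated function system on a compact metric space X such that every f_i is a similarity with the same ratio r ∈ (0,1), let 1 < β < n, and let E_β be the β-attractor. Then, with s = log β / (−log r), the s-dimensional Hausdorff measure of E_β is at most (β/(β−1))·|X|^s, where |X| is the diameter of X; in particular dim_H(E_β) ≤ log β / (−log r). -/
/-!
For every `k`, `E_β` is covered by the closures of the sets `f_{u₀} ∘ ⋯ ∘ f_{u_{k-1}} (X)`, one
for each of the `N_k` β-admissible words `u` of length `k`, and each has diameter at most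
`r ^ k * |X|`. Since `r ^ s = β⁻¹`, the `s`-dimensional sum of this cover is at most
`N_k * β⁻¹ ^ k * |X| ^ s`, so everything rests on Rényi's count `N_k ≤ β ^ (k + 1) / (β - 1)`.
The cylinder of `u` (the points whose expansion starts with `u`) lies in an interval starting at
the value `0.u` of `u`; these intervals are disjoint and ordered lexicographically, and the digit
appended to `u` is at most `β ^ (k + 1)` times the length of that interval. Summing over `u`
gives `N_{k+1} ≤ β ^ (k + 1) + N_k`.
-/

open Set Filter MeasureTheory Topology
open scoped ENNReal

noncomputable def betaT (β x : ℝ) : ℝ := Int.fract (β * x)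

/-- The `n`-th digit (0-indexed) of the β-expansion of `x ∈ [0,1)`. -/
noncomputable def betaDigit (β x : ℝ) (n : ℕ) : ℕ := ⌊β * (betaT β)^[n] x⌋₊

def betaShift (β : ℝ) : Set (ℕ → ℕ) :=
  closure {d | ∃ x ∈ Set.Ico (0 : ℝ) 1, ∀ n, d n = betaDigit β x n}

theorem sum_sub_le_of_pairwiseDisjoint_Ioo {ι : Type*} {s : Finset ι} {a b : ι → ℝ}
    {c d : ℝ} (hcd : c ≤ d) (hab : ∀ i ∈ s, a i ≤ b i)
    (hsub : ∀ i ∈ s, Ioo (a i) (b i) ⊆ Ioo c d)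
    (hdisj : (s : Set ι).PairwiseDisjoint fun i => Ioo (a i) (b i)) :
    ∑ i ∈ s, (b i - a i) ≤ d - c := by
  rw [← ENNReal.ofReal_le_ofReal_iff (sub_nonneg.2 hcd),
    ENNReal.ofReal_sum_of_nonneg fun i hi => sub_nonneg.2 (hab i hi)]
  simp_rw [← Real.volume_Ioo]
  rw [← measure_biUnion_finset hdisj fun _ _ => measurableSet_Ioo]
  exact measure_mono (iUnion₂_subset hsub)

theorem hausdorffMeasure_le_of_forall_sum_le {X : Type*} [EMetricSpace X] [MeasurableSpace X]
    [BorelSpace X] {ι : ℕ → Type*} [∀ n, Fintype (ι n)] (d : ℝ) (s : Set X) (δ : ℕ → ℝ≥0∞)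
    (hδ : Tendsto δ atTop (𝓝 0)) (t : ∀ n, ι n → Set X)
    (ht : ∀ n i, Metric.ediam (t n i) ≤ δ n) (hst : ∀ n, s ⊆ ⋃ i, t n i) {C : ℝ≥0∞}
    (hC : ∀ n, ∑ i, Metric.ediam (t n i) ^ d ≤ C) :
    μH[d] s ≤ C :=
  (Measure.hausdorffMeasure_le_liminf_sum d s δ hδ t (.of_forall ht) (.of_forall hst)).trans
    ((liminf_le_liminf (.of_forall hC)).trans (liminf_const C).le)

theorem dimH_le_ofReal_of_hausdorffMeasure_ne_top {X : Type*} [EMetricSpace X]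
    [MeasurableSpace X] [BorelSpace X] {s : Set X} {d : ℝ} (hd : 0 ≤ d) (h : μH[d] s ≠ ∞) :
    dimH s ≤ ENNReal.ofReal d :=
  dimH_le_of_hausdorffMeasure_ne_top (by rwa [Real.coe_toNNReal d hd])

theorem Real.rpow_log_div_neg_log {r β : ℝ} (hr : 0 < r) (hr1 : r ≠ 1) (hβ : 0 < β) :
    r ^ (Real.log β / -Real.log r) = β⁻¹ := by
  have hlog : Real.log r ≠ 0 := Real.log_ne_zero_of_pos_of_ne_one hr hr1
  rw [Real.rpow_def_of_pos hr, mul_div_assoc', div_neg, mul_div_cancel_left₀ _ hlog,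
    Real.exp_neg, Real.exp_log hβ]

section IteratedFunctionSystem

variable {X α : Type*}

theorem List.foldr_mem_range_foldr_take (f : α → X → X) (l : List α) (k : ℕ) (x : X) :
    l.foldr f x ∈ Set.range ((l.take k).foldr f) :=
  ⟨(l.drop k).foldr f x, by simp only [← List.foldr_append, List.take_append_drop]⟩

variable [MetricSpace X] {f : α → X → X} {r : ℝ}

theorem List.dist_foldr_eq {l : List α}
    (hl : ∀ a ∈ l, ∀ x y, dist (f a x) (f a y) = r * dist x y) (x y : X) :
    dist (l.foldr f x) (l.foldr f y) = r ^ l.length * dist x y := by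
  induction l with
  | nil => simp
  | cons a l ih =>
    rw [List.foldr_cons, List.foldr_cons, hl a List.mem_cons_self,
      ih fun b hb => hl b (List.mem_cons_of_mem a hb), List.length_cons, pow_succ]
    ring

theorem List.ediam_range_foldr_le [BoundedSpace X] (hr : 0 ≤ r) {l : List α}
    (hl : ∀ a ∈ l, ∀ x y, dist (f a x) (f a y) = r * dist x y) :
    Metric.ediam (Set.range (l.foldr f)) ≤
      ENNReal.ofReal (r ^ l.length * Metric.diam (univ : Set X)) := by
  refine Metric.ediam_le ?_
  rintro _ ⟨x, rfl⟩ _ ⟨y, rfl⟩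
  rw [edist_dist, List.dist_foldr_eq hl]
  exact ENNReal.ofReal_le_ofReal (mul_le_mul_of_nonneg_left
    (Metric.dist_le_diam_of_mem (Bornology.IsBounded.all _) (mem_univ x) (mem_univ y))
    (by positivity))

end IteratedFunctionSystem

namespace BetaExpansion

variable {β x : ℝ}

theorem betaT_mem_Ico (β x : ℝ) : betaT β x ∈ Ico (0 : ℝ) 1 :=
  ⟨Int.fract_nonneg _, Int.fract_lt_one _⟩

theorem iterate_betaT_mem_Ico (hx : x ∈ Ico (0 : ℝ) 1) (k : ℕ) :
    (betaT β)^[k] x ∈ Ico (0 : ℝ) 1 := by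
  cases k with
  | zero => exact hx
  | succ k => rw [Function.iterate_succ_apply']; exact betaT_mem_Ico β _

theorem betaDigit_succ (β x : ℝ) (i : ℕ) :
    betaDigit β x (i + 1) = betaDigit β (betaT β x) i := by
  rw [betaDigit, betaDigit, Function.iterate_succ_apply]

theorem betaDigit_zero_add_betaT (hβ : 0 ≤ β) (hx : 0 ≤ x) :
    (betaDigit β x 0 : ℝ) + betaT β x = β * x := by
  rw [betaDigit, Function.iterate_zero_apply, betaT, ← Int.cast_natCast,
    Int.natCast_floor_eq_floor (mul_nonneg hβ hx), Int.floor_add_fract]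

theorem betaDigit_le_floor (hx : x ∈ Ico (0 : ℝ) 1) (i : ℕ) : betaDigit β x i ≤ ⌊β⌋₊ := by
  have hT := iterate_betaT_mem_Ico (β := β) hx i
  rcases le_or_gt 0 β with hβ | hβ
  · exact Nat.floor_le_floor (mul_le_of_le_one_right hβ hT.2.le)
  · rw [betaDigit, Nat.floor_of_nonpos (mul_nonpos_of_nonpos_of_nonneg hβ.le hT.1)]
    exact Nat.zero_le _

noncomputable def betaWord (β x : ℝ) (k : ℕ) : List ℕ := (List.range k).map (betaDigit β x)

theorem betaWord_succ (β x : ℝ) (k : ℕ) :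
    betaWord β x (k + 1) = betaDigit β x 0 :: betaWord β (betaT β x) k := by
  simp only [betaWord, List.range_succ_eq_map, List.map_cons, List.map_map]
  exact congrArg _ (List.map_congr_left fun i _ => betaDigit_succ β x i)

theorem betaWord_succ' (β x : ℝ) (k : ℕ) :
    betaWord β x (k + 1) = betaWord β x k ++ [betaDigit β x k] := by
  simp only [betaWord, List.range_succ, List.map_append, List.map_cons, List.map_nil]

theorem length_betaWord (β x : ℝ) (k : ℕ) : (betaWord β x k).length = k := by
  simp [betaWord]

/-- The number with β-expansion `0.u₀u₁…`, evaluated by Horner's rule. -/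
noncomputable def betaVal (β : ℝ) (u : List ℕ) : ℝ :=
  u.foldr (fun (d : ℕ) (v : ℝ) => (d + v) / β) 0

theorem betaVal_nonneg (hβ : 0 ≤ β) (u : List ℕ) : 0 ≤ betaVal β u := by
  induction u with
  | nil => exact le_rfl
  | cons d u ih => exact div_nonneg (add_nonneg d.cast_nonneg ih) hβ

theorem eq_betaVal_add (hβ : 0 < β) (hx : 0 ≤ x) (k : ℕ) :
    x = betaVal β (betaWord β x k) + (betaT β)^[k] x / β ^ k := by
  induction k generalizing x with
  | zero => simp [betaWord, betaVal]
  | succ k ih =>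
    have hTx := ih (betaT_mem_Ico β x).1
    have h0 := betaDigit_zero_add_betaT hβ.le hx
    rw [betaWord_succ, Function.iterate_succ_apply, betaVal, List.foldr_cons, ← betaVal]
    linear_combination (norm := skip) (hTx - h0) / β
    field_simp
    ring

theorem betaWord_succ_of_mul_eq {y t : ℝ} {d : ℕ} (h : β * y = d + t) (ht : t ∈ Ico (0 : ℝ) 1)
    (k : ℕ) : betaWord β y (k + 1) = d :: betaWord β t k := by
  have hT : betaT β y = t := by rw [betaT, h, Int.fract_natCast_add, Int.fract_eq_self.2 ht]
  have hd : betaDigit β y 0 = d := by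
    rw [betaDigit, Function.iterate_zero_apply, h, add_comm, Nat.floor_add_natCast ht.1,
      Nat.floor_eq_zero.2 ht.2, zero_add]
  rw [betaWord_succ, hT, hd]

theorem betaVal_betaWord_mem_Ico (hβ : 1 < β) (hx : x ∈ Ico (0 : ℝ) 1) (k : ℕ) :
    betaVal β (betaWord β x k) ∈ Ico (0 : ℝ) 1 := by
  refine ⟨betaVal_nonneg (by linarith) _, lt_of_le_of_lt ?_ hx.2⟩
  have hβ0 : 0 < β := by linarith
  have hx_eq := eq_betaVal_add hβ0 hx.1 k
  have : 0 ≤ (betaT β)^[k] x / β ^ k :=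
    div_nonneg (iterate_betaT_mem_Ico hx k).1 (by positivity)
  linarith

theorem betaWord_betaVal_betaWord (hβ : 1 < β) (hx : x ∈ Ico (0 : ℝ) 1) (k : ℕ) :
    betaWord β (betaVal β (betaWord β x k)) k = betaWord β x k := by
  induction k generalizing x with
  | zero => rfl
  | succ k ih =>
    have hTx := betaT_mem_Ico β x
    rw [betaWord_succ β x, betaVal, List.foldr_cons, ← betaVal,
      betaWord_succ_of_mul_eq (d := betaDigit β x 0) ?_ (betaVal_betaWord_mem_Ico hβ hTx k),
      ih hTx]
    field_simp

theorem lt_of_betaWord_lt (hβ : 0 < β) {y : ℝ} (hx : 0 ≤ x) (hy : 0 ≤ y) {k : ℕ}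
    (h : betaWord β x k < betaWord β y k) : x < y := by
  induction k generalizing x y with
  | zero => exact absurd h (List.not_lt_nil _)
  | succ k ih =>
    have hx0 := betaDigit_zero_add_betaT hβ.le hx
    have hy0 := betaDigit_zero_add_betaT hβ.le hy
    have hTx := betaT_mem_Ico β x
    have hTy := betaT_mem_Ico β y
    rw [betaWord_succ, betaWord_succ, List.cons_lt_cons_iff] at h
    refine lt_of_mul_lt_mul_left ?_ hβ.le
    rcases h with hd | ⟨hd, hT⟩
    · have hd' : (betaDigit β x 0 : ℝ) + 1 ≤ betaDigit β y 0 := by exact_mod_cast hd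
      linarith [hTx.2, hTy.1]
    · have hT' := ih hTx.1 hTy.1 hT
      rw [← hx0, ← hy0, hd]
      linarith

def betaWords (β : ℝ) (k : ℕ) : Set (List ℕ) := (betaWord β · k) '' Ico 0 1

theorem betaWords_succ_subset (β : ℝ) (k : ℕ) :
    betaWords β (k + 1) ⊆ image2 (fun u d => u ++ [d]) (betaWords β k) (Iic ⌊β⌋₊) := by
  rintro _ ⟨x, hx, rfl⟩
  exact ⟨_, ⟨x, hx, rfl⟩, _, betaDigit_le_floor hx k, (betaWord_succ' β x k).symm⟩

theorem betaWords_finite (β : ℝ) (k : ℕ) : (betaWords β k).Finite := by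
  induction k with
  | zero => exact (finite_singleton []).subset (by rintro _ ⟨x, -, rfl⟩; rfl)
  | succ k ih => exact (ih.image2 _ (finite_Iic _)).subset (betaWords_succ_subset β k)

noncomputable def betaWordsFinset (β : ℝ) (k : ℕ) : Finset (List ℕ) :=
  (betaWords_finite β k).toFinset

@[simp]
theorem mem_betaWordsFinset {k : ℕ} {u : List ℕ} :
    u ∈ betaWordsFinset β k ↔ u ∈ betaWords β k :=
  Finite.mem_toFinset _

theorem le_floor_of_mem_betaWords {k : ℕ} {u : List ℕ} (hu : u ∈ betaWords β k) {a : ℕ}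
    (ha : a ∈ u) : a ≤ ⌊β⌋₊ := by
  obtain ⟨x, hx, rfl⟩ := hu
  obtain ⟨j, -, rfl⟩ := List.mem_map.1 ha
  exact betaDigit_le_floor hx j

theorem length_of_mem_betaWords {k : ℕ} {u : List ℕ} (hu : u ∈ betaWords β k) :
    u.length = k := by
  obtain ⟨x, -, rfl⟩ := hu
  exact length_betaWord β x k

def betaCylinder (β : ℝ) (u : List ℕ) : Set ℝ := {x ∈ Ico 0 1 | betaWord β x u.length = u}

theorem betaWord_of_mem_betaCylinder {k : ℕ} {u : List ℕ} (hu : u ∈ betaWords β k)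
    (hx : x ∈ betaCylinder β u) : betaWord β x k = u :=
  length_of_mem_betaWords hu ▸ hx.2

theorem betaVal_mem_betaCylinder (hβ : 1 < β) {k : ℕ} {u : List ℕ} (hu : u ∈ betaWords β k) :
    betaVal β u ∈ betaCylinder β u := by
  obtain ⟨x, hx, rfl⟩ := hu
  refine ⟨betaVal_betaWord_mem_Ico hβ hx k, ?_⟩
  rw [length_betaWord, betaWord_betaVal_betaWord hβ hx]

theorem betaCylinder_bddAbove (β : ℝ) (u : List ℕ) : BddAbove (betaCylinder β u) :=
  bddAbove_Ico.mono fun _ hx => hx.1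

theorem betaVal_le_sSup_betaCylinder (hβ : 1 < β) {k : ℕ} {u : List ℕ}
    (hu : u ∈ betaWords β k) :
    betaVal β u ≤ sSup (betaCylinder β u) :=
  le_csSup (betaCylinder_bddAbove β u) (betaVal_mem_betaCylinder hβ hu)

theorem sSup_betaCylinder_le_betaVal (hβ : 1 < β) {k : ℕ} {u v : List ℕ}
    (hu : u ∈ betaWords β k) (hv : v ∈ betaWords β k) (huv : u < v) :
    sSup (betaCylinder β u) ≤ betaVal β v := by
  have hv' := betaVal_mem_betaCylinder hβ hv
  refine csSup_le ⟨_, betaVal_mem_betaCylinder hβ hu⟩ fun x hx => ?_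
  refine (lt_of_betaWord_lt (by linarith) hx.1.1 hv'.1.1 (k := k) ?_).le
  rwa [betaWord_of_mem_betaCylinder hu hx, betaWord_of_mem_betaCylinder hv hv']

theorem sum_sSup_betaCylinder_sub_betaVal_le_one (hβ : 1 < β) (k : ℕ) :
    ∑ u ∈ betaWordsFinset β k, (sSup (betaCylinder β u) - betaVal β u) ≤ 1 := by
  have hmem : ∀ {u}, u ∈ betaWordsFinset β k → u ∈ betaWords β k := mem_betaWordsFinset.1
  have key := sum_sub_le_of_pairwiseDisjoint_Ioo zero_le_one
    (fun u hu => betaVal_le_sSup_betaCylinder hβ (hmem hu)) ?_ ?_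
  · simpa using key
  · intro u hu
    exact Ioo_subset_Ioo (betaVal_mem_betaCylinder hβ (hmem hu)).1.1
      (csSup_le ⟨_, betaVal_mem_betaCylinder hβ (hmem hu)⟩ fun x hx => hx.1.2.le)
  · intro u hu v hv huv
    rcases lt_or_gt_of_ne huv with h | h
    · exact Disjoint.mono Ioo_subset_Iio_self Ioo_subset_Ioi_self
        (Iio_disjoint_Ioi_of_le (sSup_betaCylinder_le_betaVal hβ (hmem hu) (hmem hv) h))
    · exact Disjoint.mono Ioo_subset_Ioi_self Ioo_subset_Iio_self
        (Iio_disjoint_Ioi_of_le (sSup_betaCylinder_le_betaVal hβ (hmem hv) (hmem hu) h)).symm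

theorem betaDigit_le_floor_sSup_betaCylinder_sub (hβ : 1 < β) (hx : x ∈ Ico (0 : ℝ) 1)
    (k : ℕ) :
    betaDigit β x k ≤
      ⌊β ^ (k + 1) * (sSup (betaCylinder β (betaWord β x k)) - betaVal β (betaWord β x k))⌋₊ := by
  have hβ0 : 0 < β := by linarith
  have hx_eq := eq_betaVal_add hβ0 hx.1 k
  have hxC : x ∈ betaCylinder β (betaWord β x k) := ⟨hx, by rw [length_betaWord]⟩
  have hx_le := le_csSup (betaCylinder_bddAbove β _) hxC
  refine Nat.floor_le_floor ?_
  have hT : β * (betaT β)^[k] x = β ^ (k + 1) * (x - betaVal β (betaWord β x k)) := by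
    linear_combination (norm := skip) (-β ^ (k + 1)) * hx_eq
    field_simp
    ring
  rw [hT]
  gcongr

theorem card_betaWordsFinset_succ_le (hβ : 1 < β) (k : ℕ) :
    ((betaWordsFinset β (k + 1)).card : ℝ) ≤ β ^ (k + 1) + (betaWordsFinset β k).card := by
  set W := betaWordsFinset β k
  set ℓ : List ℕ → ℝ := fun u => sSup (betaCylinder β u) - betaVal β u
  have hsub : betaWordsFinset β (k + 1) ⊆
      W.biUnion fun u => (Finset.range (⌊β ^ (k + 1) * ℓ u⌋₊ + 1)).image fun d => u ++ [d] := by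
    intro w hw
    obtain ⟨x, hx, rfl⟩ := mem_betaWordsFinset.1 hw
    refine Finset.mem_biUnion.2 ⟨betaWord β x k, mem_betaWordsFinset.2 ⟨x, hx, rfl⟩, ?_⟩
    exact Finset.mem_image.2 ⟨betaDigit β x k,
      Finset.mem_range_succ_iff.2 (betaDigit_le_floor_sSup_betaCylinder_sub hβ hx k),
      (betaWord_succ' β x k).symm⟩
  have hℓ : ∀ u ∈ W, 0 ≤ β ^ (k + 1) * ℓ u := fun u hu =>
    mul_nonneg (by positivity)
      (sub_nonneg.2 (betaVal_le_sSup_betaCylinder hβ (mem_betaWordsFinset.1 hu)))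
  calc ((betaWordsFinset β (k + 1)).card : ℝ)
      ≤ ∑ u ∈ W, ((⌊β ^ (k + 1) * ℓ u⌋₊ : ℝ) + 1) := by
        have hcard := (Finset.card_le_card hsub).trans Finset.card_biUnion_le
        refine (Nat.cast_le.2 hcard).trans ?_
        push_cast
        gcongr with u
        exact_mod_cast Finset.card_image_le.trans (Finset.card_range _).le
    _ ≤ ∑ u ∈ W, (β ^ (k + 1) * ℓ u + 1) := by
        gcongr with u hu
        exact Nat.floor_le (hℓ u hu)
    _ = β ^ (k + 1) * ∑ u ∈ W, ℓ u + W.card := by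
        rw [Finset.sum_add_distrib, Finset.mul_sum, Finset.sum_const, nsmul_one]
    _ ≤ β ^ (k + 1) + W.card := by
        have hℓ_sum := sum_sSup_betaCylinder_sub_betaVal_le_one hβ k
        gcongr
        exact mul_le_of_le_one_right (by positivity) hℓ_sum

theorem card_betaWordsFinset_le (hβ : 1 < β) (k : ℕ) :
    ((betaWordsFinset β k).card : ℝ) ≤ β ^ (k + 1) / (β - 1) := by
  have hβ1 : 0 < β - 1 := by linarith
  induction k with
  | zero =>
    have hcard : ((betaWordsFinset β 0).card : ℝ) ≤ 1 := by
      exact_mod_cast Finset.card_le_one.2 fun u hu v hv => by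
        rw [List.eq_nil_of_length_eq_zero (length_of_mem_betaWords (mem_betaWordsFinset.1 hu)),
          List.eq_nil_of_length_eq_zero (length_of_mem_betaWords (mem_betaWordsFinset.1 hv))]
    rw [zero_add, pow_one, le_div_iff₀ hβ1]
    nlinarith
  | succ k ih =>
    calc ((betaWordsFinset β (k + 1)).card : ℝ) ≤ β ^ (k + 1) + (betaWordsFinset β k).card :=
          card_betaWordsFinset_succ_le hβ k
      _ ≤ β ^ (k + 1) + β ^ (k + 1) / (β - 1) := by gcongr
      _ = β ^ (k + 1 + 1) / (β - 1) := by field_simp; ring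

theorem card_betaWordsFinset_mul_rpow_le {r D : ℝ} (hβ : 1 < β) (hr : 0 < r)
    (hr1 : r ≠ 1) (hD : 0 ≤ D) (k : ℕ) :
    ((betaWordsFinset β k).card : ℝ) * (r ^ k * D) ^ (Real.log β / -Real.log r) ≤
      β / (β - 1) * D ^ (Real.log β / -Real.log r) := by
  have hβ0 : 0 < β := by linarith
  have hpow : (r ^ k) ^ (Real.log β / -Real.log r) = β⁻¹ ^ k := by
    rw [← Real.rpow_natCast, ← Real.rpow_mul hr.le, mul_comm, Real.rpow_mul hr.le,
      Real.rpow_log_div_neg_log hr hr1 hβ0, Real.rpow_natCast]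
  rw [Real.mul_rpow (by positivity) hD, hpow, ← mul_assoc]
  gcongr
  calc ((betaWordsFinset β k).card : ℝ) * β⁻¹ ^ k ≤ β ^ (k + 1) / (β - 1) * β⁻¹ ^ k := by
        gcongr
        exact card_betaWordsFinset_le hβ k
    _ = β / (β - 1) := by
        rw [inv_pow, pow_succ]
        field_simp

theorem map_range_mem_betaWords {σ : ℕ → ℕ} (hσ : σ ∈ betaShift β) (k : ℕ) :
    (List.range k).map σ ∈ betaWords β k := by
  have hU : IsOpen ((Iio k).pi fun j => ({σ j} : Set ℕ)) :=
    isOpen_set_pi (finite_Iio k) fun _ _ => isOpen_discrete _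
  obtain ⟨τ, hτσ, x, hx, hτx⟩ := mem_closure_iff.1 hσ _ hU fun j _ => rfl
  refine ⟨x, hx, List.map_congr_left fun j hj => ?_⟩
  rw [← hτx j]
  exact hτσ j (List.mem_range.1 hj)

end BetaExpansion

open BetaExpansion

theorem image_betaShift_subset_iUnion_closure_range {X : Type*} [TopologicalSpace X]
    {β : ℝ} (f : ℕ → X → X) (φ : (ℕ → ℕ) → X)
    (hφ : ∀ σ ∈ betaShift β, ∀ x : X,
      Tendsto (fun k => (List.range k).foldr (fun j y => f (σ j) y) x) atTop (𝓝 (φ σ)))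
    (k : ℕ) :
    φ '' betaShift β ⊆ ⋃ u : betaWordsFinset β k, closure (range (u.1.foldr f)) := by
  rintro _ ⟨σ, hσ, rfl⟩
  refine mem_iUnion.2 ⟨⟨_, mem_betaWordsFinset.2 (map_range_mem_betaWords hσ k)⟩,
    mem_closure_of_tendsto (hφ σ hσ (φ σ)) ?_⟩
  filter_upwards [eventually_ge_atTop k] with m hm
  rw [← List.foldr_map, ← min_eq_left hm, ← List.take_range, List.map_take]
  exact List.foldr_mem_range_foldr_take f _ k _

theorem ediam_closure_range_foldr_le {X : Type*} [MetricSpace X] [BoundedSpace X]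
    {f : ℕ → X → X} {r β : ℝ} (hr : 0 ≤ r)
    (hsim : ∀ i ≤ ⌊β⌋₊, ∀ x y : X, dist (f i x) (f i y) = r * dist x y) {k : ℕ} {u : List ℕ}
    (hu : u ∈ betaWords β k) :
    Metric.ediam (closure (range (u.foldr f))) ≤
      ENNReal.ofReal (r ^ k * Metric.diam (univ : Set X)) := by
  rw [Metric.ediam_closure, ← length_of_mem_betaWords hu]
  exact List.ediam_range_foldr_le hr fun a ha => hsim a (le_floor_of_mem_betaWords hu ha)

theorem stmt2_general {X : Type*} [MetricSpace X] [CompactSpace X]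
    [MeasurableSpace X] [BorelSpace X]
    (n : ℕ) (f : ℕ → X → X) (r : ℝ) (hr0 : 0 < r) (hr1 : r < 1)
    (hsim : ∀ i < n, ∀ x y : X, dist (f i x) (f i y) = r * dist x y)
    (β : ℝ) (hβ1 : 1 < β) (hβn : β < n)
    (φ : (ℕ → ℕ) → X)
    (hφ : ∀ σ ∈ betaShift β, ∀ x : X,
      Filter.Tendsto (fun k => (List.range k).foldr (fun j y => f (σ j) y) x)
        Filter.atTop (nhds (φ σ)))
    (Eβ : Set X) (hE : Eβ = φ '' betaShift β) :
    μH[Real.log β / (-Real.log r)] Eβ ≤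
        ENNReal.ofReal (β / (β - 1) *
          Metric.diam (Set.univ : Set X) ^ (Real.log β / (-Real.log r))) ∧
      dimH Eβ ≤ ENNReal.ofReal (Real.log β / (-Real.log r)) := by
  set s := Real.log β / (-Real.log r)
  set D := Metric.diam (univ : Set X)
  have hs : 0 ≤ s :=
    div_nonneg (Real.log_nonneg hβ1.le) (neg_nonneg.2 (Real.log_nonpos hr0.le hr1.le))
  have hsim' (i : ℕ) (hi : i ≤ ⌊β⌋₊) := hsim i <| by
    exact_mod_cast ((Nat.cast_le.2 hi).trans (Nat.floor_le (by linarith))).trans_lt hβn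
  have hdiam (k : ℕ) (u : betaWordsFinset β k) :=
    ediam_closure_range_foldr_le hr0.le hsim' (mem_betaWordsFinset.1 u.2)
  have hδ : Tendsto (fun k : ℕ => ENNReal.ofReal (r ^ k * D)) atTop (𝓝 0) := by
    simpa using ENNReal.tendsto_ofReal
      ((tendsto_pow_atTop_nhds_zero_of_lt_one hr0.le hr1).mul_const D)
  have hμ : μH[s] Eβ ≤ ENNReal.ofReal (β / (β - 1) * D ^ s) := by
    rw [hE]
    refine hausdorffMeasure_le_of_forall_sum_le s _ _ hδ _ hdiam
      (image_betaShift_subset_iUnion_closure_range f φ hφ) fun k => ?_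
    calc _ ≤ ∑ _u : betaWordsFinset β k, ENNReal.ofReal ((r ^ k * D) ^ s) :=
          Finset.sum_le_sum fun u _ => (ENNReal.rpow_le_rpow (hdiam k u) hs).trans_eq
            (ENNReal.ofReal_rpow_of_nonneg (by positivity) hs)
      _ ≤ _ := by
          rw [Finset.sum_const, Finset.card_univ, Fintype.card_coe, nsmul_eq_mul,
            ← ENNReal.ofReal_natCast, ← ENNReal.ofReal_mul (Nat.cast_nonneg _)]
          exact ENNReal.ofReal_le_ofReal
            (card_betaWordsFinset_mul_rpow_le hβ1 hr0 hr1.ne Metric.diam_nonneg k)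
  exact ⟨hμ, dimH_le_ofReal_of_hausdorffMeasure_ne_top hs
    (ne_top_of_le_ne_top ENNReal.ofReal_ne_top hμ)⟩

/-- Upper bound: for an IFS of similarities of common ratio `r ∈ (0,1)` on a compact metric
space and `1 < β < n`, with `s = log β / (-log r)` the `s`-dimensional Hausdorff measure of
the β-attractor `E_β` is at most `(β/(β-1))·|X|^s`; in particular
`dim_H(E_β) ≤ log β / (-log r)`. -/
theorem stmt2 {X : Type*} [MetricSpace X] [CompactSpace X] [Nonempty X]
    [MeasurableSpace X] [BorelSpace X]
    (n : ℕ) (f : ℕ → X → X) (r : ℝ) (hr0 : 0 < r) (hr1 : r < 1)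
    (hsim : ∀ i < n, ∀ x y : X, dist (f i x) (f i y) = r * dist x y)
    (β : ℝ) (hβ1 : 1 < β) (hβn : β < n)
    (φ : (ℕ → ℕ) → X)
    (hφ : ∀ σ ∈ betaShift β, ∀ x : X,
      Filter.Tendsto (fun k => (List.range k).foldr (fun j y => f (σ j) y) x)
        Filter.atTop (nhds (φ σ)))
    (Eβ : Set X) (hE : Eβ = φ '' betaShift β) :
    μH[Real.log β / (-Real.log r)] Eβ ≤
        ENNReal.ofReal (β / (β - 1) *
          Metric.diam (Set.univ : Set X) ^ (Real.log β / (-Real.log r))) ∧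
      dimH Eβ ≤ ENNReal.ofReal (Real.log β / (-Real.log r)) :=
  stmt2_general n f r hr0 hr1 hsim β hβ1 hβn φ hφ Eβ hE
end

section
/- Let Q be the set of β ∈ (2,3] for which the β-expansion of 1 is finite with all digits in {0,2}, i.e. 1 = ε_1/β + ⋯ + ε_k/β^k with every ε_i ∈ {0,2}. For every β ∈ (2,3] \ Q, C_{β;02} is the unique invariant set of the local IFS F_β: any nonempty compact A ⊆ [0,1] with A = f_0(A) ∪ f_2(A ∩ [0,β−2]) equals C_{β;02}. -/
open Set Filter MeasureTheory Topology

/-- The digits of the β-expansion of 1 (0-indexed: `epsSeq β (i-1) = ε_i`). -/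
noncomputable def epsSeq (β : ℝ) : ℕ → ℕ
  | 0 => ⌊β⌋₊
  | n + 1 => betaDigit β (β - ⌊β⌋₊) n

/-- The Cantor-type set `C_{β;02}`. -/
noncomputable def cantor02 (β : ℝ) : Set ℝ :=
  closure {x | x ∈ Set.Ico (0 : ℝ) 1 ∧ ∀ n, betaDigit β x n ∈ ({0, 2} : Set ℕ)}

/-- `Q`: the set of `β ∈ (2,3]` for which the β-expansion of 1 is finite with all digits
in `{0,2}`. -/
noncomputable def Qset : Set ℝ :=
  {β ∈ Set.Ioc (2 : ℝ) 3 | ∃ k, (∀ i < k, epsSeq β i ∈ ({0, 2} : Set ℕ)) ∧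
    ∀ i, k ≤ i → epsSeq β i = 0}

/-!
The set `A` contains `0` (iterate `f₀` and use closedness), and it is closed under `f₀` and under
`f₂` on `[0, β-2]`. Truncating the expansion of a point with digits in `{0,2}` after `n` digits
produces a point of `A` built by `n` such steps, so `C_{β;02} ⊆ A`.

Conversely, unwinding the invariance equation `m` times writes every `a ∈ A` as
`a = (d₀ + (d₁ + ⋯ + (d_{m-1} + b)/β ⋯)/β)/β` with `dᵢ ∈ {0,2}` and every intermediate tail in
`A ⊆ [0,1]`. Every tail of the finite word `d₀ ⋯ d_{m-1}` then has value `≤ 1`, and value `1` is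
impossible: a tail `2 d_{j+1} ⋯` of value `1` would make `d_{j+1} ⋯ d_{m-1}` the finite expansion
of `β - 2`, i.e. `β ∈ Q`. So the truncated value is the β-expansion of a point with digits in
`{0,2}`, and these points converge to `a`.
-/

/-- `wordVal β w t = Σ_{i<k} wᵢ β^{-(i+1)} + t β^{-k}` for `w = w₀ ⋯ w_{k-1}`. -/
noncomputable def wordVal (β : ℝ) (w : List ℕ) (t : ℝ) : ℝ :=
  w.foldr (fun d s => ((d : ℝ) + s) / β) t

def digits02 (β : ℝ) : Set ℝ :=
  {x | x ∈ Ico (0 : ℝ) 1 ∧ ∀ n, betaDigit β x n ∈ ({0, 2} : Set ℕ)}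

/-- The right-hand side `f₀(A) ∪ f₂(A ∩ [0, β-2])` of the invariance equation of `F_β`. -/
def localIFSImage (β : ℝ) (A : Set ℝ) : Set ℝ :=
  (fun x => x / β) '' A ∪ (fun x => (x + 2) / β) '' (A ∩ Icc 0 (β - 2))

section Words

variable {β : ℝ}

@[simp]
lemma wordVal_nil (t : ℝ) : wordVal β [] t = t := rfl

@[simp]
lemma wordVal_cons (t : ℝ) (d : ℕ) (w : List ℕ) :
    wordVal β (d :: w) t = ((d : ℝ) + wordVal β w t) / β := rfl

lemma wordVal_nonneg (hβ : 0 < β) (w : List ℕ) {t : ℝ} (ht : 0 ≤ t) : 0 ≤ wordVal β w t := by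
  induction w with
  | nil => exact ht
  | cons d w ih => rw [wordVal_cons]; positivity

lemma wordVal_eq_add (hβ : 0 < β) (w : List ℕ) (t : ℝ) :
    wordVal β w t = wordVal β w 0 + t / β ^ w.length := by
  induction w with
  | nil => simp
  | cons d w ih =>
    rw [wordVal_cons, wordVal_cons, ih, List.length_cons]
    field_simp
    ring

lemma wordVal_le_wordVal (hβ : 0 < β) (w : List ℕ) {t t' : ℝ} (h : t ≤ t') :
    wordVal β w t ≤ wordVal β w t' := by
  induction w with
  | nil => exact h
  | cons d w ih => simp only [wordVal_cons]; gcongr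

lemma List.getD_mem_of_forall_mem {S : Set ℕ} {w : List ℕ} (hw : ∀ d ∈ w, d ∈ S) (h0 : 0 ∈ S)
    (n : ℕ) : w.getD n 0 ∈ S := by
  rcases lt_or_ge n w.length with hn | hn
  · rw [List.getD_eq_getElem _ _ hn]
    exact hw _ (List.getElem_mem hn)
  · rwa [List.getD_eq_default _ _ hn]

end Words

section Expansion

variable {β : ℝ}

lemma betaT_mem_Ico (β x : ℝ) : betaT β x ∈ Ico (0 : ℝ) 1 :=
  ⟨Int.fract_nonneg _, Int.fract_lt_one _⟩

lemma betaDigit_succ (β x : ℝ) (n : ℕ) : betaDigit β x (n + 1) = betaDigit β (betaT β x) n := by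
  rw [betaDigit, betaDigit, Function.iterate_succ_apply]

lemma betaT_add_div (hβ : 0 < β) (d : ℕ) {x : ℝ} (hx : x ∈ Ico (0 : ℝ) 1) :
    betaT β ((d + x) / β) = x := by
  rw [betaT, mul_div_cancel₀ _ hβ.ne', add_comm, Int.fract_add_natCast,
    Int.fract_eq_self.mpr hx]

lemma betaDigit_add_div_zero (hβ : 0 < β) (d : ℕ) {x : ℝ} (hx : x ∈ Ico (0 : ℝ) 1) :
    betaDigit β ((d + x) / β) 0 = d := by
  rw [betaDigit, Function.iterate_zero_apply, mul_div_cancel₀ _ hβ.ne', add_comm,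
    Nat.floor_add_natCast hx.1, Nat.floor_eq_zero.mpr hx.2, zero_add]

lemma betaDigit_add_betaT_div (hβ : 0 < β) {x : ℝ} (hx : 0 ≤ x) :
    (betaDigit β x 0 + betaT β x) / β = x := by
  rw [betaDigit, Function.iterate_zero_apply, betaT,
    natCast_floor_eq_intCast_floor (by positivity), Int.floor_add_fract,
    mul_div_cancel_left₀ _ hβ.ne']

lemma betaDigit_wordVal (hβ : 0 < β) {w : List ℕ} (hw : ∀ n, wordVal β (w.drop n) 0 < 1)
    (n : ℕ) : betaDigit β (wordVal β w 0) n = w.getD n 0 := by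
  induction w generalizing n with
  | nil =>
    have hfix : betaT β 0 = 0 := by simp [betaT]
    simp [betaDigit, Function.iterate_fixed hfix]
  | cons d r ih =>
    have hr : wordVal β r 0 ∈ Ico (0 : ℝ) 1 := ⟨wordVal_nonneg hβ r le_rfl, hw 1⟩
    cases n with
    | zero => exact betaDigit_add_div_zero hβ d hr
    | succ n =>
      rw [betaDigit_succ, wordVal_cons, betaT_add_div hβ d hr, List.getD_cons_succ]
      exact ih (fun n => hw (n + 1)) n

lemma tendsto_sub_div_pow (hβ : 1 < β) {u : ℕ → ℝ} (hu : ∀ n, u n ∈ Icc (0 : ℝ) 1) (a : ℝ) :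
    Tendsto (fun n => a - u n / β ^ n) atTop (𝓝 a) := by
  have hpow : Tendsto (fun n : ℕ => 1 / β ^ n) atTop (𝓝 0) :=
    tendsto_const_nhds.div_atTop (tendsto_pow_atTop_atTop_of_one_lt hβ)
  have hu0 : Tendsto (fun n => u n / β ^ n) atTop (𝓝 0) :=
    squeeze_zero (fun n => div_nonneg (hu n).1 (by positivity))
      (fun n => by gcongr; exact (hu n).2) hpow
  simpa using tendsto_const_nhds.sub hu0

end Expansion

section Admissible

variable {β : ℝ}

lemma mem_Qset_of_wordVal_eq (hβ : β ∈ Ioo (2 : ℝ) 3) {r : List ℕ}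
    (hr : ∀ d ∈ r, d ∈ ({0, 2} : Set ℕ)) (hlt : ∀ n, wordVal β (r.drop n) 0 < 1)
    (hval : wordVal β r 0 = β - 2) : β ∈ Qset := by
  have hfl : ⌊β⌋₊ = 2 := by
    rw [Nat.floor_eq_iff (by linarith [hβ.1])]
    constructor <;> norm_num <;> linarith [hβ.1, hβ.2]
  have heps : ∀ i, epsSeq β (i + 1) = r.getD i 0 := by
    intro i
    rw [epsSeq, hfl, ← betaDigit_wordVal (by linarith [hβ.1]) hlt, hval]
    norm_num
  refine ⟨Ioo_subset_Ioc_self hβ, r.length + 1, fun i hi => ?_, fun i hi => ?_⟩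
  · cases i with
    | zero => simp [epsSeq, hfl]
    | succ i => exact heps i ▸ List.getD_mem_of_forall_mem hr (by simp) i
  · obtain ⟨j, rfl⟩ : ∃ j, i = j + 1 := Nat.exists_eq_add_of_le' (by omega)
    rw [heps, List.getD_eq_default _ _ (by omega)]

lemma wordVal_drop_lt_one (hβ : β ∈ Ioc (2 : ℝ) 3) (hβQ : β ∉ Qset) {w : List ℕ}
    (hw : ∀ d ∈ w, d ∈ ({0, 2} : Set ℕ)) (hle : ∀ n, wordVal β (w.drop n) 0 ≤ 1) :
    ∀ n, wordVal β (w.drop n) 0 < 1 := by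
  have hβ0 : 0 < β := by linarith [hβ.1]
  induction w with
  | nil => simp
  | cons d r ih =>
    have hr := ih (fun e he => hw e (List.mem_cons_of_mem d he)) (fun n => hle (n + 1))
    have hr0 : wordVal β r 0 < 1 := by simpa using hr 0
    rintro (_ | n)
    · have hle0 : ((d : ℝ) + wordVal β r 0) / β ≤ 1 := by simpa using hle 0
      simp only [List.drop_zero, wordVal_cons]
      rcases hw d List.mem_cons_self with rfl | rfl
      · rw [div_lt_one hβ0]; push_cast; linarith [hβ.1]
      · refine lt_of_le_of_ne hle0 fun h => hβQ (mem_Qset_of_wordVal_eq ⟨hβ.1, ?_⟩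
          (fun e he => hw e (List.mem_cons_of_mem _ he)) hr ?_)
        all_goals rw [div_eq_one_iff_eq hβ0.ne'] at h; push_cast at h; linarith
    · exact hr n

lemma wordVal_mem_digits02 (hβ : β ∈ Ioc (2 : ℝ) 3) (hβQ : β ∉ Qset) {w : List ℕ}
    (hw : ∀ d ∈ w, d ∈ ({0, 2} : Set ℕ)) (hle : ∀ n, wordVal β (w.drop n) 0 ≤ 1) :
    wordVal β w 0 ∈ digits02 β := by
  have hβ0 : 0 < β := by linarith [hβ.1]
  have hlt := wordVal_drop_lt_one hβ hβQ hw hle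
  refine ⟨⟨wordVal_nonneg hβ0 w le_rfl, by simpa using hlt 0⟩, fun n => ?_⟩
  rw [betaDigit_wordVal hβ0 hlt]
  exact List.getD_mem_of_forall_mem hw (by simp) n

end Admissible

section Invariant

variable {β : ℝ} {A : Set ℝ}

lemma div_mem_of_invariant (hinv : A = localIFSImage β A) {x : ℝ} (hx : x ∈ A) : x / β ∈ A := by
  rw [hinv]
  exact Or.inl ⟨x, hx, rfl⟩

lemma add_two_div_mem_of_invariant (hinv : A = localIFSImage β A) {x : ℝ} (hx : x ∈ A)
    (hx0 : 0 ≤ x) (hx2 : x ≤ β - 2) : (x + 2) / β ∈ A := by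
  rw [hinv]
  exact Or.inr ⟨x, ⟨hx, hx0, hx2⟩, rfl⟩

lemma exists_digit_of_invariant (hinv : A = localIFSImage β A) {a : ℝ} (ha : a ∈ A) :
    ∃ d ∈ ({0, 2} : Set ℕ), ∃ b ∈ A, a = (d + b) / β := by
  rw [hinv] at ha
  rcases ha with ⟨b, hb, rfl⟩ | ⟨b, ⟨hb, -⟩, rfl⟩
  · exact ⟨0, by simp, b, hb, by simp⟩
  · exact ⟨2, by simp, b, hb, by push_cast; ring_nf⟩

lemma zero_mem_of_forall_div_mem (hβ : 1 < β) (hA : IsClosed A) (hne : A.Nonempty)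
    (hf₀ : ∀ x ∈ A, x / β ∈ A) : (0 : ℝ) ∈ A := by
  obtain ⟨x, hx⟩ := hne
  have hpow : ∀ n : ℕ, x / β ^ n ∈ A := by
    intro n
    induction n with
    | zero => simpa using hx
    | succ n ih => simpa [pow_succ, div_div] using hf₀ _ ih
  exact hA.mem_of_tendsto
    (tendsto_const_nhds.div_atTop (tendsto_pow_atTop_atTop_of_one_lt hβ))
    (Eventually.of_forall hpow)

/-- `y - T^n y / β^n` is the β-expansion of `y` truncated after `n` digits. -/
lemma sub_iterate_betaT_div_mem (hβ : 0 < β) (h0A : (0 : ℝ) ∈ A)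
    (hf₀ : ∀ x ∈ A, x / β ∈ A) (hf₂ : ∀ x ∈ A, x ≤ β - 2 → (x + 2) / β ∈ A) (n : ℕ) :
    ∀ y ∈ digits02 β, y - (betaT β)^[n] y / β ^ n ∈ A := by
  induction n with
  | zero => intro y _; simpa using h0A
  | succ n ih =>
    rintro y ⟨hy, hdig⟩
    have hTy : betaT β y ∈ digits02 β :=
      ⟨betaT_mem_Ico β y, fun m => betaDigit_succ β y m ▸ hdig (m + 1)⟩
    set z := betaT β y - (betaT β)^[n] (betaT β y) / β ^ n
    have hz : z ∈ A := ih _ hTy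
    have hy_eq := betaDigit_add_betaT_div hβ hy.1
    have htrunc : y - (betaT β)^[n + 1] y / β ^ (n + 1) = (betaDigit β y 0 + z) / β := by
      rw [Function.iterate_succ_apply]
      nth_rewrite 1 [← hy_eq]
      simp only [z]
      field_simp
      ring
    rw [htrunc]
    rcases hdig 0 with hd | hd <;> rw [hd]
    · simpa using hf₀ z hz
    · have hTle : betaT β y ≤ β - 2 := by
        have := hy.2
        rw [← hy_eq, hd, div_lt_one hβ] at this
        push_cast at this
        linarith
      have hzle : z ≤ β - 2 := by
        have : 0 ≤ (betaT β)^[n] (betaT β y) / β ^ n :=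
          div_nonneg (Function.iterate_succ_apply' (betaT β) n y ▸ betaT_mem_Ico β _).1
            (by positivity)
        linarith
      simpa [add_comm] using hf₂ z hz hzle

lemma cantor02_subset (hβ : 1 < β) (hA : IsClosed A) (h0A : (0 : ℝ) ∈ A)
    (hf₀ : ∀ x ∈ A, x / β ∈ A) (hf₂ : ∀ x ∈ A, x ≤ β - 2 → (x + 2) / β ∈ A) :
    cantor02 β ⊆ A := by
  refine closure_minimal (fun y hy => ?_) hA
  have hiter : ∀ n, (betaT β)^[n] y ∈ Icc (0 : ℝ) 1 := fun n => by
    cases n with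
    | zero => exact Ico_subset_Icc_self hy.1
    | succ n => exact Function.iterate_succ_apply' (betaT β) n y ▸
        Ico_subset_Icc_self (betaT_mem_Ico β _)
  exact hA.mem_of_tendsto (tendsto_sub_div_pow hβ hiter y) (Eventually.of_forall fun n =>
    sub_iterate_betaT_div_mem (by linarith) h0A hf₀ hf₂ n y hy)

lemma exists_word_of_mem (hback : ∀ a ∈ A, ∃ d ∈ ({0, 2} : Set ℕ), ∃ b ∈ A, a = (d + b) / β)
    (m : ℕ) {a : ℝ} (ha : a ∈ A) :
    ∃ w : List ℕ, ∃ b ∈ A, w.length = m ∧ (∀ d ∈ w, d ∈ ({0, 2} : Set ℕ)) ∧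
      (∀ n, wordVal β (w.drop n) b ∈ A) ∧ wordVal β w b = a := by
  induction m generalizing a with
  | zero => exact ⟨[], a, ha, rfl, by simp, fun n => by simpa using ha, rfl⟩
  | succ m ih =>
    obtain ⟨d, hd, a', ha', rfl⟩ := hback a ha
    obtain ⟨w, b, hb, hlen, hw, hdrop, rfl⟩ := ih ha'
    refine ⟨d :: w, b, hb, by simp [hlen], ?_, ?_, rfl⟩
    · exact List.forall_mem_cons.2 ⟨hd, hw⟩
    · rintro (_ | n)
      · exact ha
      · exact hdrop n

lemma subset_cantor02 (hβ : β ∈ Ioc (2 : ℝ) 3) (hβQ : β ∉ Qset) (hsub : A ⊆ Icc 0 1)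
    (hback : ∀ a ∈ A, ∃ d ∈ ({0, 2} : Set ℕ), ∃ b ∈ A, a = (d + b) / β) :
    A ⊆ cantor02 β := by
  have hβ0 : 0 < β := by linarith [hβ.1]
  intro a ha
  choose w b hb hlen hw hdrop hval using fun m => exists_word_of_mem hback m ha
  have happrox : ∀ m, a - b m / β ^ m = wordVal β (w m) 0 := fun m => by
    rw [← hval m, wordVal_eq_add hβ0, hlen]
    ring
  refine mem_closure_of_tendsto
    ((tendsto_sub_div_pow (by linarith [hβ.1]) (fun m => hsub (hb m)) a).congr happrox)
    (Eventually.of_forall fun m => wordVal_mem_digits02 hβ hβQ (hw m) fun n => ?_)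
  calc wordVal β ((w m).drop n) 0 ≤ wordVal β ((w m).drop n) (b m) :=
        wordVal_le_wordVal hβ0 _ (hsub (hb m)).1
    _ ≤ 1 := (hsub (hdrop m n)).2

end Invariant

/-- **Theorem 5 (uniqueness part).** For `β ∈ (2,3] \ Q`, `C_{β;02}` is the unique invariant
set of the local IFS `F_β`: any nonempty compact `A ⊆ [0,1]` with
`A = f_0(A) ∪ f_2(A ∩ [0, β-2])` equals `C_{β;02}`. -/
theorem stmt17 (β : ℝ) (hβ : β ∈ Set.Ioc (2 : ℝ) 3) (hβQ : β ∉ Qset)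
    (A : Set ℝ) (hne : A.Nonempty) (hcomp : IsCompact A) (hsub : A ⊆ Set.Icc 0 1)
    (hinv : A = (fun x => x / β) '' A ∪
      (fun x => (x + 2) / β) '' (A ∩ Set.Icc 0 (β - 2))) :
    A = cantor02 β := by
  have hβ1 : 1 < β := by linarith [hβ.1]
  have hf₀ : ∀ x ∈ A, x / β ∈ A := fun x hx => div_mem_of_invariant hinv hx
  have hf₂ : ∀ x ∈ A, x ≤ β - 2 → (x + 2) / β ∈ A := fun x hx hx2 =>
    add_two_div_mem_of_invariant hinv hx (hsub hx).1 hx2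
  have h0A : (0 : ℝ) ∈ A := zero_mem_of_forall_div_mem hβ1 hcomp.isClosed hne hf₀
  exact (subset_cantor02 hβ hβQ hsub fun a ha => exists_digit_of_invariant hinv ha).antisymm
    (cantor02_subset hβ1 hcomp.isClosed h0A hf₀ hf₂)
end

section
/- For β ∈ (3,4] and λ = 1/β, the set Λ(λ) = { Σ_{k≥1} i_k λ^k : i_k ∈ {0,1,3} } contains C_{β;013}, with equality if and only if λ = 1/4 (i.e. β = 4). -/
open Set Filter MeasureTheory Topology

/-- The digit set `{0, 1, 3}`: `θ 0 = 0`, `θ 1 = 1`, `θ 2 = 3`. -/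
def theta013 : ℕ → ℕ := fun i => if i = 2 then 3 else i

/-- The Cantor-type set `C_{β;θ_0⋯θ_{q-1}}`. -/
noncomputable def betaCantor (β : ℝ) (q : ℕ) (θ : ℕ → ℕ) : Set ℝ :=
  closure {x | x ∈ Set.Ico (0 : ℝ) 1 ∧ ∀ n, ∃ i < q, betaDigit β x n = θ i}

/-- `Λ(λ) = { Σ_{k≥1} i_k λ^k : i_k ∈ {0,1,3} }` (no admissibility restriction). -/
noncomputable def Lambda (lam : ℝ) : Set ℝ :=
  {y | ∃ d : ℕ → ℕ, (∀ k, d k ∈ ({0, 1, 3} : Set ℕ)) ∧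
    y = ∑' k : ℕ, (d k : ℝ) * lam ^ (k + 1)}

/-! A point of the defining set of `C_{β;013}` has β-digits in `{0,1,3}` and is the sum of its
β-expansion, so the inclusion follows once `Λ(1/β)` is closed, being the continuous image of the
compact space `{0,1,3}^ℕ`. Since `C_{β;013} ⊆ [0,1]`, equality fails for `β < 4`: then
`3λ/(1-λ) = 3/(β-1) > 1` lies in `Λ(λ)`. For `β = 4`, a truncated base-4 expansion with digits in
`{0,1,3}` is its own β-expansion (padded with zeros), and these truncations approximate every point
of `Λ(1/4)`. -/

lemma betaT_iterate_mem_Ico (β : ℝ) {x : ℝ} (hx : x ∈ Ico (0 : ℝ) 1) (n : ℕ) :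
    (betaT β)^[n] x ∈ Ico (0 : ℝ) 1 := by
  cases n with
  | zero => exact hx
  | succ n =>
    rw [Function.iterate_succ_apply']
    exact ⟨Int.fract_nonneg _, Int.fract_lt_one _⟩

lemma betaT_iterate_succ {β x : ℝ} (hβ : 0 ≤ β) (hx : x ∈ Ico (0 : ℝ) 1) (n : ℕ) :
    (betaT β)^[n + 1] x = β * (betaT β)^[n] x - betaDigit β x n := by
  rw [Function.iterate_succ_apply', betaT, Int.fract, betaDigit,
    natCast_floor_eq_intCast_floor (mul_nonneg hβ (betaT_iterate_mem_Ico β hx n).1)]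

lemma eq_sum_betaDigit_add_betaT_iterate {β x : ℝ} (hβ : 0 < β) (hx : x ∈ Ico (0 : ℝ) 1)
    (n : ℕ) :
    x = ∑ k ∈ Finset.range n, (betaDigit β x k : ℝ) * (1 / β) ^ (k + 1)
        + (1 / β) ^ n * (betaT β)^[n] x := by
  induction n with
  | zero => simp
  | succ n ih =>
    have hβinv : 1 / β * β = 1 := one_div_mul_cancel hβ.ne'
    rw [Finset.sum_range_succ, betaT_iterate_succ hβ.le hx, pow_succ]
    linear_combination ih - (1 / β) ^ n * (betaT β)^[n] x * hβinv

lemma hasSum_betaDigit {β x : ℝ} (hβ : 1 < β) (hx : x ∈ Ico (0 : ℝ) 1) :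
    HasSum (fun k => (betaDigit β x k : ℝ) * (1 / β) ^ (k + 1)) x := by
  have hβ0 : 0 < β := one_pos.trans hβ
  have hlam : 1 / β < 1 := (div_lt_one hβ0).mpr hβ
  rw [hasSum_iff_tendsto_nat_of_nonneg (fun k => by positivity)]
  have hremainder : Tendsto (fun n => (1 / β) ^ n * (betaT β)^[n] x) atTop (𝓝 0) := by
    refine squeeze_zero (fun n => mul_nonneg (by positivity) (betaT_iterate_mem_Ico β hx n).1)
      (fun n => ?_) (tendsto_pow_atTop_nhds_zero_of_lt_one (by positivity) hlam)
    exact mul_le_of_le_one_right (by positivity) (betaT_iterate_mem_Ico β hx n).2.le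
  have hpartial := (tendsto_const_nhds (x := x)).sub hremainder
  rw [sub_zero] at hpartial
  refine hpartial.congr fun n => ?_
  linarith [eq_sum_betaDigit_add_betaT_iterate hβ0 hx n]

lemma summable_digits_mul_pow {d : ℕ → ℕ} {B : ℕ} (hd : ∀ k, d k ≤ B) {lam : ℝ}
    (h0 : 0 ≤ lam) (h1 : lam < 1) : Summable fun k => (d k : ℝ) * lam ^ (k + 1) := by
  have hgeom : Summable fun k : ℕ => (B * lam) * lam ^ k :=
    (summable_geometric_of_lt_one h0 h1).mul_left _
  refine hgeom.of_nonneg_of_le (fun k => by positivity) fun k => ?_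
  rw [pow_succ', ← mul_assoc]
  gcongr
  exact_mod_cast hd k

lemma isCompact_setOf_digit_tsums {D : Set ℕ} (hD : D.Finite) {lam : ℝ} (h0 : 0 ≤ lam)
    (h1 : lam < 1) :
    IsCompact {y | ∃ d : ℕ → ℕ, (∀ k, d k ∈ D) ∧
      y = ∑' k, (d k : ℝ) * lam ^ (k + 1)} := by
  have : Finite D := hD
  obtain ⟨B, hB⟩ := hD.bddAbove
  have hcont : Continuous fun c : ℕ → D => ∑' k, ((c k : ℕ) : ℝ) * lam ^ (k + 1) := by
    refine continuous_tsum (fun k => (continuous_of_discreteTopology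
      (f := fun n : D => ((n : ℕ) : ℝ) * lam ^ (k + 1))).comp (continuous_apply k))
      (summable_digits_mul_pow (d := fun _ => B) (fun _ => le_rfl) h0 h1) fun k c => ?_
    rw [Real.norm_of_nonneg (by positivity)]
    gcongr
    exact_mod_cast hB (c k).2
  convert isCompact_range hcont using 1
  ext y
  constructor
  · rintro ⟨d, hd, rfl⟩
    exact ⟨fun k => ⟨d k, hd k⟩, rfl⟩
  · rintro ⟨c, rfl⟩
    exact ⟨fun k => c k, fun k => (c k).2, rfl⟩

lemma isClosed_Lambda {lam : ℝ} (h0 : 0 ≤ lam) (h1 : lam < 1) : IsClosed (Lambda lam) :=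
  (isCompact_setOf_digit_tsums (toFinite _) h0 h1).isClosed

lemma three_mul_div_one_sub_mem_Lambda {lam : ℝ} (h0 : 0 ≤ lam) (h1 : lam < 1) :
    3 * lam / (1 - lam) ∈ Lambda lam := by
  refine ⟨fun _ => 3, fun _ => by simp, ?_⟩
  have hterm : (fun k : ℕ => ((3 : ℕ) : ℝ) * lam ^ (k + 1)) = fun k => 3 * lam * lam ^ k := by
    funext k
    push_cast
    ring
  rw [hterm, tsum_mul_left, tsum_geometric_of_lt_one h0 h1, div_eq_mul_inv]

lemma Lambda_not_subset_Icc {lam : ℝ} (hlam : 1 / 4 < lam) (h1 : lam < 1) :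
    ¬ Lambda lam ⊆ Icc 0 1 := by
  intro hsub
  have hle := (hsub (three_mul_div_one_sub_mem_Lambda (by linarith) h1)).2
  rw [div_le_one (by linarith)] at hle
  linarith

lemma exists_theta013_eq_iff {n : ℕ} :
    (∃ i < 3, n = theta013 i) ↔ n ∈ ({0, 1, 3} : Set ℕ) := by
  constructor
  · rintro ⟨i, hi, rfl⟩
    interval_cases i <;> simp [theta013]
  · rintro (rfl | rfl | rfl)
    exacts [⟨0, by decide, rfl⟩, ⟨1, by decide, rfl⟩, ⟨2, by decide, rfl⟩]

lemma betaCantor_subset_Icc (β : ℝ) (q : ℕ) (θ : ℕ → ℕ) :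
    betaCantor β q θ ⊆ Icc 0 1 :=
  closure_minimal (fun _ hx => Ico_subset_Icc_self hx.1) isClosed_Icc

lemma betaCantor_subset_Lambda {β : ℝ} (hβ : 1 < β) :
    betaCantor β 3 theta013 ⊆ Lambda (1 / β) := by
  have hβ0 : 0 < β := one_pos.trans hβ
  refine closure_minimal ?_ (isClosed_Lambda (by positivity) ((div_lt_one hβ0).mpr hβ))
  rintro x ⟨hx, hdigits⟩
  exact ⟨betaDigit β x, fun k => exists_theta013_eq_iff.mp (hdigits k),
    (hasSum_betaDigit hβ hx).tsum_eq.symm⟩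

section digitSum

variable (b : ℕ) (e : ℕ → ℕ)

noncomputable def digitSum (M : ℕ) : ℝ :=
  ∑ k ∈ Finset.range M, (e k : ℝ) * (1 / b) ^ (k + 1)

lemma digitSum_nonneg (M : ℕ) : 0 ≤ digitSum b e M :=
  Finset.sum_nonneg fun _ _ => by positivity

lemma digitSum_succ (M : ℕ) :
    digitSum b e (M + 1) = (e 0 + digitSum b (fun k => e (k + 1)) M) / b := by
  rw [digitSum, Finset.sum_range_succ', digitSum, add_div, Finset.sum_div, add_comm]
  congr 1
  · ring
  · exact Finset.sum_congr rfl fun k _ => by ring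

variable {b e}

lemma digitSum_lt_one (he : ∀ k, e k < b) (M : ℕ) : digitSum b e M < 1 := by
  induction M generalizing e with
  | zero => simp [digitSum]
  | succ M ih =>
    have hlt : (e 0 : ℝ) + 1 ≤ b := by exact_mod_cast he 0
    rw [digitSum_succ, div_lt_one (by linarith [(e 0).cast_nonneg (α := ℝ)])]
    linarith [ih (fun k => he (k + 1))]

lemma mul_digitSum_succ (he : ∀ k, e k < b) (M : ℕ) :
    b * digitSum b e (M + 1) = e 0 + digitSum b (fun k => e (k + 1)) M := by
  have hb : (b : ℝ) ≠ 0 := by exact_mod_cast (he 0).ne_bot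
  rw [digitSum_succ]
  field_simp

lemma betaT_digitSum (he : ∀ k, e k < b) (M : ℕ) :
    betaT b (digitSum b e M) = digitSum b (fun k => e (k + 1)) (M - 1) := by
  cases M with
  | zero => simp [betaT, digitSum]
  | succ M =>
    rw [betaT, mul_digitSum_succ he, Int.fract_natCast_add, Nat.add_sub_cancel,
      Int.fract_eq_self]
    exact ⟨digitSum_nonneg _ _ M, digitSum_lt_one (fun k => he (k + 1)) M⟩

lemma betaT_iterate_digitSum (he : ∀ k, e k < b) (M n : ℕ) :
    (betaT b)^[n] (digitSum b e M) = digitSum b (fun k => e (n + k)) (M - n) := by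
  induction n generalizing e M with
  | zero => simp
  | succ n ih =>
    rw [Function.iterate_succ_apply, betaT_digitSum he, ih fun k => he (k + 1),
      Nat.sub_sub, Nat.add_comm 1 n]
    simp only [Nat.add_right_comm n 1, Nat.add_assoc]

lemma betaDigit_digitSum (he : ∀ k, e k < b) (M n : ℕ) :
    betaDigit b (digitSum b e M) n = if n < M then e n else 0 := by
  rw [betaDigit, betaT_iterate_digitSum he]
  split_ifs with hn
  · obtain ⟨m, hm⟩ : ∃ m, M - n = m + 1 := ⟨M - n - 1, by omega⟩
    have htail := digitSum_nonneg b (fun k => e (n + (k + 1))) m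
    have htail' := digitSum_lt_one (fun k => he (n + (k + 1))) m
    rw [hm, mul_digitSum_succ (fun k => he _), Nat.floor_eq_iff (by positivity)]
    constructor <;> simp only [Nat.add_zero] <;> linarith
  · rw [Nat.sub_eq_zero_of_le (not_lt.mp hn)]
    simp [digitSum]

end digitSum

lemma Lambda_quarter_subset_betaCantor : Lambda (1 / 4) ⊆ betaCantor 4 3 theta013 := by
  rintro y ⟨d, hd, rfl⟩
  have hd_lt : ∀ k, d k < 4 := fun k => by
    have := hd k
    simp only [mem_insert_iff, mem_singleton_iff] at this
    omega
  have hsum := (summable_digits_mul_pow (fun k => (hd_lt k).le) (lam := 1 / 4)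
    (by norm_num) (by norm_num)).hasSum
  refine mem_closure_of_tendsto hsum.tendsto_sum_nat (Eventually.of_forall fun N => ?_)
  have hpartial : digitSum 4 d N ∈ {x | x ∈ Ico (0 : ℝ) 1 ∧
      ∀ n, ∃ i < 3, betaDigit 4 x n = theta013 i} := by
    refine ⟨⟨digitSum_nonneg _ _ N, digitSum_lt_one hd_lt N⟩, fun n => ?_⟩
    have hdigit := betaDigit_digitSum hd_lt N n
    push_cast at hdigit
    rw [hdigit, exists_theta013_eq_iff]
    split_ifs
    exacts [hd n, by simp]
  simpa only [digitSum, Nat.cast_ofNat] using hpartial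

/-- For `β ∈ (3,4]` and `λ = 1/β`, `Λ(λ) ⊇ C_{β;013}`, with equality if and only if
`λ = 1/4`, i.e. `β = 4`. -/
theorem stmt19 (β : ℝ) (hβ : β ∈ Set.Ioc (3 : ℝ) 4) :
    betaCantor β 3 theta013 ⊆ Lambda (1 / β) ∧
      (betaCantor β 3 theta013 = Lambda (1 / β) ↔ β = 4) := by
  obtain ⟨hβ3, hβ4⟩ := hβ
  have hsub := betaCantor_subset_Lambda (by linarith : 1 < β)
  refine ⟨hsub, fun heq => ?_, ?_⟩
  · by_contra hne
    have hlam : 1 / 4 < 1 / β := one_div_lt_one_div_of_lt (by linarith) (lt_of_le_of_ne hβ4 hne)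
    refine Lambda_not_subset_Icc hlam ((div_lt_one (by linarith)).mpr (by linarith)) ?_
    exact heq ▸ betaCantor_subset_Icc β 3 theta013
  · rintro rfl
    exact hsub.antisymm Lambda_quarter_subset_betaCantor
end
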